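/- There exists a constant β_A > 0 such that for all h > 0 and all y ∈ ℝ³: (1) {x ∈ ℝ³ : |x₃ − y₃| ≤ 2β_A h} ∖ B_{h/8}(y) ⊂ N_{θ₀}(y), and (2) {x : f_y(x) = 3h/16} ∩ {x : |x₃ − y₃| ≤ 2β_A h} ⊂ B_{7h/32}(y). -/
import Mathlib


open Real Set Pointwise Metric

noncomputable section

abbrev R3 := EuclideanSpace ℝ (Fin 3)
abbrev R2 := EuclideanSpace ℝ (Fin 2)

/-- The point `(a, b, c) ∈ ℝ³`. -/
def toR3 (a b c : ℝ) : R3 := (WithLp.equiv 2 (Fin 3 → ℝ)).symm ![a, b, c]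

/-- Vertical projection `Π : ℝ³ → ℝ²`. -/
def pr (x : R3) : R2 := (WithLp.equiv 2 (Fin 2 → ℝ)).symm ![x 0, x 1]

/-- The `i`-th coordinate direction of `ℝ²`. -/
def e2 (i : Fin 2) : R2 := EuclideanSpace.single i 1

/-- `u` satisfies the minimal surface equation
`(1 + u_y²) u_xx − 2 u_x u_y u_xy + (1 + u_x²) u_yy = 0` on `Ω`, and is `C²` there. -/
def SatisfiesMSE (u : R2 → ℝ) (Ω : Set R2) : Prop :=
  ∀ p ∈ Ω, ContDiffAt ℝ 2 u p ∧
    (1 + fderiv ℝ u p (e2 1) ^ 2) * fderiv ℝ (fun q => fderiv ℝ u q (e2 0)) p (e2 0)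
      - 2 * fderiv ℝ u p (e2 0) * fderiv ℝ u p (e2 1) *
          fderiv ℝ (fun q => fderiv ℝ u q (e2 0)) p (e2 1)
      + (1 + fderiv ℝ u p (e2 0) ^ 2) *
          fderiv ℝ (fun q => fderiv ℝ u q (e2 1)) p (e2 1) = 0

/-- `S` is a minimal surface with boundary `bd`: near every non-boundary point, after a
rigid rotation, `S` coincides with the graph of a solution of the minimal surface
equation. -/
def IsMinimalSurface (S bd : Set R3) : Prop :=
  bd ⊆ S ∧ ∀ z ∈ S \ bd, ∃ (Q : R3 ≃ₗᵢ[ℝ] R3) (ε : ℝ) (u : R2 → ℝ), 0 < ε ∧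
    SatisfiesMSE u (ball (pr (Q z)) ε) ∧
    (Q '' S) ∩ {x : R3 | dist (pr x) (pr (Q z)) < ε ∧ |x 2 - (Q z) 2| < ε} =
      {x : R3 | pr x ∈ ball (pr (Q z)) ε ∧ x = toR3 (x 0) (x 1) (u (pr x)) ∧
        |x 2 - (Q z) 2| < ε}

/-- `S` is graphical at `z`: near `z` it lies on the graph of a differentiable function
of `(x₁, x₂)`; equivalently the tangent plane at `z` is not vertical. -/
def GraphicalAt (S : Set R3) (z : R3) : Prop :=
  ∃ ε > 0, ∃ u : R2 → ℝ, DifferentiableOn ℝ u (ball (pr z) ε) ∧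
    ∀ x ∈ S ∩ ball z ε, x 2 = u (pr x)

/-- The unique positive solution `t₀` of `cosh t = t · sinh t`. -/
def tcrit : ℝ := sInf {t | 0 < t ∧ Real.cosh t ≤ t * Real.sinh t}

/-- `sin² θ₀` for the critical catenoid cone angle `θ₀`. -/
def sinSqθ₀ : ℝ := tcrit ^ 2 / (tcrit ^ 2 + Real.cosh tcrit ^ 2)

/-- The middle portion of the unit vertical catenoid centered at `y`. -/
def Cat0At (y : R3) : Set R3 :=
  {x | Real.cosh (x 2 - y 2) ^ 2 = (x 0 - y 0) ^ 2 + (x 1 - y 1) ^ 2 ∧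
    |x 2 - y 2| < tcrit}

/-- The open solid double cone `N_{θ₀}(y)` of critical angle centered at `y`. -/
def Ncone (y : R3) : Set R3 := {x | x ≠ y ∧ (x 2 - y 2) ^ 2 < dist x y ^ 2 * sinSqθ₀}

/-- The catenoid-foliation function `f_y` centered at `y`: `y + (x−y)/f_y(x) ∈ Cat₀(y)`. -/
def fCat (y x : R3) : ℝ := sInf {l | 0 < l ∧ y + l⁻¹ • (x - y) ∈ Cat0At y}

/-- The open tubular neighborhood of radius `r` of a set. -/
def Tub (r : ℝ) {α : Type*} [PseudoEMetricSpace α] (s : Set α) : Set α :=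
  Metric.thickening r s


lemma two_mem_tset : (2:ℝ) ∈ {t : ℝ | 0 < t ∧ Real.cosh t ≤ t * Real.sinh t} := by
  refine ⟨by norm_num, ?_⟩
  rw [Real.cosh_eq, Real.sinh_eq, Real.exp_neg]
  have h1 := Real.add_one_le_exp (2:ℝ)
  have h2 := Real.exp_pos (2:ℝ)
  have h3 : Real.exp 2 * (Real.exp 2)⁻¹ = 1 := mul_inv_cancel₀ h2.ne'
  have h4 : 0 < (Real.exp 2)⁻¹ := inv_pos.2 h2
  nlinarith

lemma one_le_tcrit : 1 ≤ tcrit := by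
  apply le_csInf ⟨2, two_mem_tset⟩
  intro t ht
  by_contra hlt
  push_neg at hlt
  have hsp : 0 < Real.sinh t := Real.sinh_pos_iff.2 ht.1
  have hcs : Real.cosh t - Real.sinh t = Real.exp (-t) := Real.cosh_sub_sinh t
  have := Real.exp_pos (-t)
  nlinarith [ht.2]

lemma tcrit_le_two : tcrit ≤ 2 :=
  csInf_le ⟨0, fun t ht => ht.1.le⟩ two_mem_tset

lemma cosh_tcrit_le : Real.cosh tcrit ≤ 8 := by
  have h0 : (0:ℝ) < tcrit := lt_of_lt_of_le one_pos one_le_tcrit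
  have h1 : Real.cosh tcrit ≤ Real.cosh 2 := by
    have : |tcrit| ≤ |(2:ℝ)| := by
      rw [abs_of_pos h0, abs_of_pos (by norm_num : (0:ℝ) < 2)]
      exact tcrit_le_two
    exact Real.cosh_le_cosh.2 this
  have h2 : Real.cosh 2 ≤ 8 := by
    rw [Real.cosh_eq, Real.exp_neg]
    have he : Real.exp 2 = Real.exp 1 ^ 2 := by
      rw [← Real.exp_nat_mul]; norm_num
    have h3 := Real.exp_one_lt_d9
    have h4 := Real.exp_one_gt_d9
    have h5 : 0 < (Real.exp 2)⁻¹ := inv_pos.2 (Real.exp_pos 2)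
    have h6 : (Real.exp 2)⁻¹ ≤ 1 := by
      rw [inv_le_one_iff₀]
      right
      nlinarith
    nlinarith
  linarith

lemma sinSq_lb : 1/65 ≤ sinSqθ₀ := by
  unfold sinSqθ₀
  have h1 := one_le_tcrit
  have h2 := cosh_tcrit_le
  have h3 : (0:ℝ) < Real.cosh tcrit := Real.cosh_pos tcrit
  rw [le_div_iff₀ (by positivity)]
  nlinarith

lemma exp_quarter_lt : Real.exp (1/4) < 1.29 := by
  have h4 : Real.exp (1/4) ^ (4:ℕ) = Real.exp 1 := by
    rw [← Real.exp_nat_mul]; norm_num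
  have h1 := Real.exp_one_lt_d9
  have hp := Real.exp_pos (1/4 : ℝ)
  nlinarith [sq_nonneg (Real.exp (1/4) - 1.29), sq_nonneg (Real.exp (1/4) + 1.29),
    sq_nonneg (Real.exp (1/4) ^ 2 - 1.29 ^ 2), sq_nonneg (Real.exp (1/4) ^ 2 + 1.29 ^ 2)]

lemma cosh_sq_le {t : ℝ} (ht : |t| ≤ 1/8) : Real.cosh t ^ 2 ≤ 1.29 := by
  have h1 : Real.cosh t ≤ Real.exp |t| := by
    rw [Real.cosh_eq]
    have ha := Real.exp_le_exp.2 (le_abs_self t)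
    have hb := Real.exp_le_exp.2 (neg_le_abs t)
    linarith
  have h2 : Real.exp |t| ≤ Real.exp (1/8) := Real.exp_le_exp.2 ht
  have h3 : Real.exp (1/8) ^ (2:ℕ) = Real.exp (1/4) := by
    rw [← Real.exp_nat_mul]; norm_num
  have h4 := exp_quarter_lt
  have h5 : (0:ℝ) < Real.cosh t := Real.cosh_pos t
  nlinarith [Real.exp_pos (1/8:ℝ)]

lemma dist_sq_R3 (x y : R3) :
    dist x y ^ 2 = (x 0 - y 0)^2 + (x 1 - y 1)^2 + (x 2 - y 2)^2 := by
  rw [EuclideanSpace.dist_eq, Real.sq_sqrt (by positivity)]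
  simp [Fin.sum_univ_three, Real.dist_eq, sq_abs]

set_option maxHeartbeats 1000000 in
/-- Existence of the universal constant `β_A > 0` of the catenoid-foliation
construction: for all `h > 0` and all centers `y`, the slab `{|x₃ − y₃| ≤ 2β_A h}`
minus `B_{h/8}(y)` lies in the solid cone `N_{θ₀}(y)`, and the catenoid leaf
`{f_y = 3h/16}` within that slab lies in `B_{7h/32}(y)`. -/
theorem stmt13 :
    ∃ βA : ℝ, 0 < βA ∧ ∀ h : ℝ, 0 < h → ∀ y : R3,
      ({x : R3 | |x 2 - y 2| ≤ 2 * βA * h} \ ball y (h / 8) ⊆ Ncone y) ∧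
      {x : R3 | fCat y x = 3 * h / 16} ∩ {x : R3 | |x 2 - y 2| ≤ 2 * βA * h} ⊆
        ball y (7 * h / 32) := by
  refine ⟨1/200, by norm_num, ?_⟩
  intro h hh y
  constructor
  · rintro x ⟨hslab, hball⟩
    simp only [mem_setOf_eq] at hslab
    rw [mem_ball, not_lt] at hball
    have hd2 := dist_sq_R3 x y
    have hdn : (0:ℝ) ≤ dist x y := dist_nonneg
    refine ⟨?_, ?_⟩
    · intro hxy
      rw [hxy, dist_self] at hball; linarith
    · have hs := sinSq_lb
      have hd : (h/8)^2 ≤ dist x y ^2 := by nlinarith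
      have key : (h/8)^2 * (1/65) ≤ dist x y ^2 * sinSqθ₀ :=
        mul_le_mul hd hs (by norm_num) (by positivity)
      have ha : (x 2 - y 2)^2 ≤ (h/100)^2 := by
        have h1 : |x 2 - y 2| ≤ h/100 := by linarith
        nlinarith [sq_abs (x 2 - y 2), abs_nonneg (x 2 - y 2)]
      nlinarith [mul_pos hh hh]
  · rintro x ⟨hf, hslab⟩
    simp only [mem_setOf_eq] at hf hslab
    have hne : {l : ℝ | 0 < l ∧ y + l⁻¹ • (x - y) ∈ Cat0At y}.Nonempty := by
      by_contra hemp
      rw [Set.not_nonempty_iff_eq_empty] at hemp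
      unfold fCat at hf
      rw [hemp, Real.sInf_empty] at hf
      linarith
    have hbdd : BddBelow {l : ℝ | 0 < l ∧ y + l⁻¹ • (x - y) ∈ Cat0At y} :=
      ⟨0, fun l hl => hl.1.le⟩
    obtain ⟨l, hlS, hlu⟩ := Real.lt_sInf_add_pos hne (show (0:ℝ) < h/1000 by positivity)
    have hll : 3*h/16 ≤ l := by
      have := csInf_le hbdd hlS
      unfold fCat at hf
      linarith [hf ▸ this]
    have hlu' : l < 3*h/16 + h/1000 := by
      unfold fCat at hf
      rw [hf] at hlu
      linarith
    obtain ⟨hl0, hcat⟩ := hlS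
    have hz : ∀ i : Fin 3, (y + l⁻¹ • (x - y)) i - y i = l⁻¹ * (x i - y i) := by
      intro i
      simp [PiLp.add_apply, PiLp.smul_apply, PiLp.sub_apply, smul_eq_mul]
    simp only [Cat0At, mem_setOf_eq] at hcat
    rw [hz 2, hz 0, hz 1] at hcat
    obtain ⟨hceq, -⟩ := hcat
    have hln : l ≠ 0 := hl0.ne'
    set t := l⁻¹ * (x 2 - y 2) with htdef
    have ht8 : |t| ≤ 1/8 := by
      rw [htdef, abs_mul, abs_inv, abs_of_pos hl0, inv_mul_le_iff₀ hl0]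
      linarith
    have hcsq := cosh_sq_le ht8
    have hsum : (x 0 - y 0)^2 + (x 1 - y 1)^2 = l^2 * Real.cosh t ^ 2 := by
      have h0 : (x 0 - y 0) = l * (l⁻¹ * (x 0 - y 0)) := by field_simp
      have h1 : (x 1 - y 1) = l * (l⁻¹ * (x 1 - y 1)) := by field_simp
      rw [h0, h1, hceq]; ring
    have hd2 := dist_sq_R3 x y
    have ha : (x 2 - y 2)^2 ≤ (h/100)^2 := by
      have h1 : |x 2 - y 2| ≤ h/100 := by linarith
      nlinarith [sq_abs (x 2 - y 2), abs_nonneg (x 2 - y 2)]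
    rw [mem_ball]
    have hdn : (0:ℝ) ≤ dist x y := dist_nonneg
    have h3 : l^2 * Real.cosh t ^ 2 ≤ l^2 * 1.29 :=
      mul_le_mul_of_nonneg_left hcsq (sq_nonneg l)
    have hub : l ≤ 377*h/2000 := by linarith
    have h2 : l^2 ≤ (377*h/2000)^2 := pow_le_pow_left₀ hl0.le hub 2
    have h4 : l^2 * 1.29 ≤ (377*h/2000)^2 * 1.29 :=
      mul_le_mul_of_nonneg_right h2 (by norm_num)
    have h5 : (377*h/2000)^2 * 1.29 + (h/100)^2 < (7*h/32)^2 := by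
      nlinarith [mul_pos hh hh]
    have hgoal : dist x y ^ 2 < (7*h/32)^2 := by linarith
    exact lt_of_pow_lt_pow_left₀ 2 (by positivity) hgoal


end
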